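/- Let α ∈ (0, π] and let m ≥ 1 be an odd integer. Then ∫₀^α (1 − θ/α)² (cos θ)^m sin θ dθ = 1/(m+1) − (1/((m+1) 2^{m+1})) binom(m+1, (m+1)/2) + (2^{1−m}/((m+1) α²)) Σ_{k=0}^{(m−1)/2} binom(m+1, k) (cos((m−2k+1)α) − 1)/(m−2k+1)². -/

import Mathlib

/-!
Integrating by parts against `d(-cos^(m+1) θ / (m+1))` turns the integral into
`1/(m+1) - 2/(α(m+1)) ∫₀^α (1 - θ/α) cos^(m+1) θ dθ`, and `m + 1 = 2s` is even. The power
reduction formula `4^s cos^(2s) θ = binom(2s,s) + 2 Σ_{k<s} binom(2s,k) cos(2(s-k)θ)` (the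
binomial expansion of `(e^{iθ} + e^{-iθ})^(2s)`, folded by the symmetry `k ↦ 2s - k`) leaves
only integrals of `(1 - θ/α) cos(jθ)`, which are elementary.
-/

open Real Finset intervalIntegral

theorem two_mul_cos_pow (n : ℕ) (x : ℝ) :
    (2 * cos x) ^ n
      = ∑ k ∈ range (n + 1), (n.choose k : ℝ) * cos (((n : ℝ) - 2 * k) * x) := by
  have hC : (2 * Complex.cos x) ^ n = ∑ k ∈ range (n + 1),
      (n.choose k : ℂ) * Complex.exp ((((n : ℝ) - 2 * k) * x : ℝ) * Complex.I) := by
    rw [Complex.two_cos, add_comm, add_pow]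
    refine sum_congr rfl fun k hk => ?_
    have hk : k ≤ n := Nat.lt_succ_iff.mp (mem_range.mp hk)
    rw [← Complex.exp_nat_mul, ← Complex.exp_nat_mul, ← Complex.exp_add]
    push_cast [hk]
    ring_nf
  calc (2 * cos x) ^ n = ((2 * Complex.cos x) ^ n).re := by
        rw [← Complex.ofReal_cos]; norm_cast
    _ = _ := by
        rw [hC, Complex.re_sum]
        simp only [← Complex.ofReal_natCast, Complex.re_ofReal_mul, Complex.exp_ofReal_mul_I_re]

theorem Finset.sum_range_two_mul_add_one_of_symm {M : Type*} [AddCommMonoid M] (s : ℕ)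
    (f : ℕ → M) (hf : ∀ k ≤ 2 * s, f (2 * s - k) = f k) :
    ∑ k ∈ range (2 * s + 1), f k = f s + 2 • ∑ k ∈ range s, f k := by
  have hupper : ∑ k ∈ range s, f (s + 1 + k) = ∑ k ∈ range s, f k := by
    rw [← sum_range_reflect]
    refine sum_congr rfl fun k hk => ?_
    have hk : k < s := mem_range.mp hk
    rw [show s + 1 + (s - 1 - k) = 2 * s - k by omega, hf k (by omega)]
  rw [show 2 * s + 1 = (s + 1) + s by ring, sum_range_add, sum_range_succ, hupper, two_nsmul]
  abel

theorem cos_pow_two_mul (s : ℕ) (x : ℝ) :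
    cos x ^ (2 * s) = ((2 * s).choose s
      + 2 * ∑ k ∈ range s, ((2 * s).choose k : ℝ) * cos (2 * ((s : ℝ) - k) * x)) / 4 ^ s := by
  have hsymm : ∀ k ≤ 2 * s,
      ((2 * s).choose (2 * s - k) : ℝ) * cos ((((2 * s : ℕ) : ℝ) - 2 * (2 * s - k : ℕ)) * x)
        = ((2 * s).choose k : ℝ) * cos ((((2 * s : ℕ) : ℝ) - 2 * k) * x) := by
    intro k hk
    rw [Nat.choose_symm hk, ← cos_neg]
    push_cast [hk]
    ring_nf
  rw [eq_div_iff (by positivity), show (4 : ℝ) ^ s = 2 ^ (2 * s) by rw [pow_mul]; norm_num,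
    ← mul_pow, mul_comm, two_mul_cos_pow, sum_range_two_mul_add_one_of_symm s _ hsymm,
    nsmul_eq_mul]
  push_cast
  congr 1
  · simp
  · congr 1
    refine sum_congr rfl fun k _ => ?_
    ring_nf

theorem integral_one_sub_div (α : ℝ) (hα : α ≠ 0) :
    ∫ θ in (0 : ℝ)..α, (1 - θ / α) = α / 2 := by
  simp only [integral_sub intervalIntegrable_const (intervalIntegrable_id.div_const α),
    integral_div, integral_const, integral_id]
  field_simp
  ring

theorem integral_one_sub_div_mul_cos (α j : ℝ) (hα : α ≠ 0) (hj : j ≠ 0) :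
    ∫ θ in (0 : ℝ)..α, (1 - θ / α) * cos (j * θ) = (1 - cos (j * α)) / (α * j ^ 2) := by
  have hderiv : ∀ x ∈ Set.uIcc (0 : ℝ) α, HasDerivAt
      (fun θ => (1 - θ / α) * sin (j * θ) / j - cos (j * θ) / (α * j ^ 2))
      ((1 - x / α) * cos (j * x)) x := by
    intro x _
    have hlin : HasDerivAt (fun θ => 1 - θ / α) (-(1 / α)) x := by
      simpa using ((hasDerivAt_id x).div_const α).const_sub 1
    have hsin : HasDerivAt (fun θ => sin (j * θ)) (cos (j * x) * j) x := by
      simpa using ((hasDerivAt_id x).const_mul j).sin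
    have hcos : HasDerivAt (fun θ => cos (j * θ)) (-sin (j * x) * j) x := by
      simpa using ((hasDerivAt_id x).const_mul j).cos
    refine (((hlin.mul hsin).div_const j).sub (hcos.div_const (α * j ^ 2))).congr_deriv ?_
    field_simp
    ring
  rw [integral_eq_sub_of_hasDerivAt hderiv ((by fun_prop : Continuous _).intervalIntegrable _ _)]
  simp only [mul_zero, sin_zero, cos_zero]
  field_simp
  ring

theorem integral_one_sub_div_mul_cos_pow_two_mul (α : ℝ) (hα : α ≠ 0) (s : ℕ) :
    ∫ θ in (0 : ℝ)..α, (1 - θ / α) * cos θ ^ (2 * s)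
      = ((2 * s).choose s * α / 2 - 2 / α * ∑ k ∈ range s, ((2 * s).choose k : ℝ)
          * (cos (2 * ((s : ℝ) - k) * α) - 1) / (2 * ((s : ℝ) - k)) ^ 2) / 4 ^ s := by
  have hexpand : ∀ θ, (1 - θ / α) * cos θ ^ (2 * s) = ((2 * s).choose s * (1 - θ / α) + 2 *
      ∑ k ∈ range s, ((2 * s).choose k : ℝ) * ((1 - θ / α) * cos (2 * ((s : ℝ) - k) * θ)))
        / 4 ^ s := by
    intro θ
    rw [cos_pow_two_mul, mul_div_assoc', mul_add, mul_sum, mul_sum, mul_sum]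
    congr 2
    · ring
    · exact sum_congr rfl fun _ _ => by ring
  have hterm : ∀ k ∈ range s,
      ∫ θ in (0 : ℝ)..α, ((2 * s).choose k : ℝ) * ((1 - θ / α) * cos (2 * ((s : ℝ) - k) * θ))
        = -(1 / α) * (((2 * s).choose k : ℝ) * (cos (2 * ((s : ℝ) - k) * α) - 1)
          / (2 * ((s : ℝ) - k)) ^ 2) := by
    intro k hk
    have hk : (k : ℝ) < s := by exact_mod_cast mem_range.mp hk
    rw [integral_const_mul, integral_one_sub_div_mul_cos α _ hα (by linarith)]
    field_simp
    ring
  simp_rw [hexpand]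
  rw [integral_div, integral_add, integral_const_mul, integral_const_mul, integral_finsetSum,
    sum_congr rfl hterm, ← mul_sum, integral_one_sub_div α hα]
  · ring
  all_goals first
    | exact fun _ _ => (by fun_prop : Continuous _).intervalIntegrable _ _
    | exact (by fun_prop : Continuous _).intervalIntegrable _ _

theorem integral_one_sub_div_sq_mul_cos_pow_mul_sin (α : ℝ) (hα : α ≠ 0) (m : ℕ) :
    ∫ θ in (0 : ℝ)..α, (1 - θ / α) ^ 2 * cos θ ^ m * sin θ
      = 1 / (m + 1)
        - 2 / (α * (m + 1)) * ∫ θ in (0 : ℝ)..α, (1 - θ / α) * cos θ ^ (m + 1) := by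
  have hu : ∀ x ∈ Set.uIcc 0 α,
      HasDerivAt (fun θ => (1 - θ / α) ^ 2) (-(2 / α) * (1 - x / α)) x := by
    intro x _
    have hlin : HasDerivAt (fun θ => 1 - θ / α) (-(1 / α)) x := by
      simpa using ((hasDerivAt_id x).div_const α).const_sub 1
    exact (hlin.pow 2).congr_deriv (by ring)
  have hv : ∀ x ∈ Set.uIcc 0 α,
      HasDerivAt (fun θ => -cos θ ^ (m + 1) / (m + 1)) (cos x ^ m * sin x) x := by
    intro x _
    refine ((hasDerivAt_cos x).pow (m + 1)).neg.div_const _ |>.congr_deriv ?_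
    field_simp
    simp only [Nat.add_sub_cancel]
    push_cast
    ring
  have hrest : ∫ x in (0 : ℝ)..α, -(2 / α) * (1 - x / α) * (-cos x ^ (m + 1) / (m + 1))
      = 2 / (α * (m + 1)) * ∫ x in (0 : ℝ)..α, (1 - x / α) * cos x ^ (m + 1) := by
    rw [← integral_const_mul]
    congr 1
    ext x
    field_simp
  simp_rw [mul_assoc]
  rw [integral_mul_deriv_eq_deriv_mul hu hv ((by fun_prop : Continuous _).intervalIntegrable _ _)
    ((by fun_prop : Continuous _).intervalIntegrable _ _), hrest]
  norm_num [div_self hα, neg_div]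

/-- for `α ∈ (0, π]` and odd `m ≥ 1`,
`∫₀^α (1 - θ/α)² (cos θ)^m sin θ dθ
  = 1/(m+1) - (1/((m+1) 2^(m+1))) binom(m+1,(m+1)/2)
    + (2^(1-m)/((m+1)α²)) Σ_{k=0}^{(m-1)/2} binom(m+1,k)
        (cos((m-2k+1)α) - 1)/(m-2k+1)²`. -/
theorem askey_integral_odd
    (α : ℝ) (hα : α ∈ Set.Ioc 0 π) (m : ℕ) (hm : Odd m) :
    ∫ θ in (0 : ℝ)..α, (1 - θ / α) ^ 2 * (Real.cos θ) ^ m * Real.sin θ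
      = 1 / ((m : ℝ) + 1)
        - (1 / (((m : ℝ) + 1) * 2 ^ (m + 1))) * ((m + 1).choose ((m + 1) / 2) : ℝ)
        + (2 : ℝ) ^ (1 - (m : ℤ)) / (((m : ℝ) + 1) * α ^ 2) *
            ∑ k ∈ Finset.range ((m - 1) / 2 + 1),
              ((m + 1).choose k : ℝ) *
                (Real.cos (((m : ℝ) - 2 * (k : ℝ) + 1) * α) - 1) /
                  ((m : ℝ) - 2 * (k : ℝ) + 1) ^ 2 := by
  obtain ⟨t, rfl⟩ := hm
  have hα0 : α ≠ 0 := hα.1.ne'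
  have hm1 : 2 * t + 1 + 1 = 2 * (t + 1) := by ring
  have hrange : (2 * t + 1 - 1) / 2 + 1 = t + 1 := by omega
  have hfreq (k : ℕ) : ((2 * t + 1 : ℕ) : ℝ) - 2 * k + 1 = 2 * (((t + 1 : ℕ) : ℝ) - k) := by
    push_cast
    ring
  rw [integral_one_sub_div_sq_mul_cos_pow_mul_sin α hα0, hm1,
    integral_one_sub_div_mul_cos_pow_two_mul α hα0, hrange, Nat.mul_div_cancel_left _ two_pos]
  simp only [hfreq]
  have h4 : (4 : ℝ) ^ (t + 1) = 2 ^ (2 * (t + 1)) := by rw [pow_mul]; norm_num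
  have h2 : (2 : ℝ) ^ (2 * (t + 1)) = 2 ^ (2 * t + 1) * 2 := by ring
  rw [zpow_sub₀ two_ne_zero, zpow_one, zpow_natCast, h4, h2]
  field_simp
  ring
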